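/- Let f and g be monic polynomials over F_q of degrees m and n. Then the composed sum f ⊕ g is irreducible over F_q if and only if f and g are both irreducible over F_q and gcd(m, n) = 1. -/

import Mathlib

open Polynomial

noncomputable def acRoots (F : Type*) [Field F] (f : F[X]) : Multiset (AlgebraicClosure F) :=
  (f.map (algebraMap F (AlgebraicClosure F))).roots

/-- Composed sum: `(f ⊕ g)(x) = ∏_α ∏_β (x - (α + β))` over all roots `α` of `f`
and `β` of `g` in the algebraic closure. -/
noncomputable def compAdd (F : Type*) [Field F] (f g : F[X]) : (AlgebraicClosure F)[X] :=
  ((acRoots F f).bind fun α => (acRoots F g).map fun β => X - C (α + β)).prod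

/-!
Let `σ x = x ^ q` be the Frobenius and `deg x` the degree of the minimal polynomial of `x`
over `F_q`. Then `σ^k x = x` iff `deg x ∣ k`, so `deg (x + y) ∣ lcm (deg x) (deg y)`.
If `m = deg x` and `n = deg y` are coprime and `k = deg (x + y)`, then
`c = σ^k x - x = y - σ^k y` is fixed by `σ^m` and by `σ^n`, hence lies in `F_q`; iterating,
`x = σ^(k m) x = x + m c` and `y = σ^(k n) y = y - n c`, so `c = 0`. Thus `m ∣ k` and `n ∣ k`,
and `deg (x + y) = m n`.

The composed sum has degree `m n` and vanishes at every `α + β`. If `f` and `g` are irreducible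
of coprime degrees, it is therefore the minimal polynomial of `α + β`. If it is irreducible, it is
the minimal polynomial of `α + β`, and `m n ∣ lcm (deg α) (deg β) ≤ deg α * deg β ≤ m n` forces
`f` and `g` to be the minimal polynomials of `α` and `β`, of coprime degrees.
-/

theorem AlgHom.pow_apply_eq_add_nsmul {R A : Type*} [CommSemiring R] [Semiring A]
    [Algebra R A] {σ : A →ₐ[R] A} {x c : A} (hx : σ x = x + c) (hc : σ c = c) (j : ℕ) :
    (σ ^ j) x = x + j • c := by
  induction j with
  | zero => simp
  | succ j ih =>
    rw [pow_succ', AlgHom.mul_apply, ih, map_add, map_nsmul, hx, hc, succ_nsmul]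
    abel

theorem eq_zero_of_nsmul_eq_zero_of_coprime {M : Type*} [AddMonoid M] {m n : ℕ}
    (hmn : m.Coprime n) {c : M} (hm : m • c = 0) (hn : n • c = 0) : c = 0 := by
  apply AddMonoid.addOrderOf_eq_one_iff.1
  exact Nat.eq_one_of_dvd_coprimes hmn (addOrderOf_dvd_of_nsmul_eq_zero hm)
    (addOrderOf_dvd_of_nsmul_eq_zero hn)

theorem Nat.eq_and_eq_and_coprime_of_mul_dvd_lcm {a b m n : ℕ} (ha : 0 < a) (hb : 0 < b)
    (ham : a ≤ m) (hbn : b ≤ n) (h : m * n ∣ Nat.lcm a b) :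
    a = m ∧ b = n ∧ Nat.Coprime a b := by
  have hlcm_le : Nat.lcm a b ≤ a * b := Nat.le_of_dvd (by positivity) (Nat.lcm_dvd_mul a b)
  have hle_lcm : m * n ≤ Nat.lcm a b := Nat.le_of_dvd (Nat.lcm_pos ha hb) h
  have hab : a * b ≤ m * n := Nat.mul_le_mul ham hbn
  refine ⟨by nlinarith, by nlinarith, ?_⟩
  exact ((Nat.lcm_eq_mul_iff.1 (by omega)).resolve_left ha.ne').resolve_left hb.ne'

namespace FiniteField

variable {Fq K : Type*} [Field Fq] [Fintype Fq] [Field K] [Algebra Fq K]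

theorem frobeniusAlgHom_pow_apply (k : ℕ) (x : K) :
    (frobeniusAlgHom Fq K ^ k) x = x ^ Fintype.card Fq ^ k := by
  rw [AlgHom.coe_pow, coe_frobeniusAlgHom, pow_iterate]

theorem frobeniusAlgHom_pow_apply_eq_self_iff {x : K} (hx : IsIntegral Fq x) (k : ℕ) :
    (frobeniusAlgHom Fq K ^ k) x = x ↔ (minpoly Fq x).natDegree ∣ k := by
  rw [(minpoly.irreducible hx).natDegree_dvd_iff_dvd_X_pow_card_pow_sub_X, minpoly.dvd_iff,
    frobeniusAlgHom_pow_apply, Nat.card_eq_fintype_card]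
  simp [sub_eq_zero]

theorem natDegree_minpoly_add_dvd_lcm {x y : K} (hx : IsIntegral Fq x) (hy : IsIntegral Fq y) :
    (minpoly Fq (x + y)).natDegree ∣
      Nat.lcm (minpoly Fq x).natDegree (minpoly Fq y).natDegree := by
  rw [← frobeniusAlgHom_pow_apply_eq_self_iff (hx.add hy), map_add,
    (frobeniusAlgHom_pow_apply_eq_self_iff hx _).2 (Nat.dvd_lcm_left _ _),
    (frobeniusAlgHom_pow_apply_eq_self_iff hy _).2 (Nat.dvd_lcm_right _ _)]

theorem natDegree_minpoly_add_of_coprime {x y : K} (hx : IsIntegral Fq x) (hy : IsIntegral Fq y)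
    (hco : Nat.Coprime (minpoly Fq x).natDegree (minpoly Fq y).natDegree) :
    (minpoly Fq (x + y)).natDegree = (minpoly Fq x).natDegree * (minpoly Fq y).natDegree := by
  set m := (minpoly Fq x).natDegree
  set n := (minpoly Fq y).natDegree
  set k := (minpoly Fq (x + y)).natDegree
  set φ := frobeniusAlgHom Fq K
  have fixed_iff {z : K} (hz : IsIntegral Fq z) (j : ℕ) :=
    frobeniusAlgHom_pow_apply_eq_self_iff hz j
  set c := (φ ^ k) x - x with hc
  have hσx : (φ ^ k) x = x + c := by rw [hc]; abel
  have hσy : (φ ^ k) y = y + -c := by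
    have := (fixed_iff (hx.add hy) k).2 dvd_rfl
    rw [map_add] at this
    linear_combination this
  have commute_of_fixed {z : K} {j : ℕ} (hz : (φ ^ j) z = z) :
      (φ ^ j) ((φ ^ k) z) = (φ ^ k) z := by
    rw [← AlgHom.mul_apply, pow_mul_comm, AlgHom.mul_apply, hz]
  have hxm : (φ ^ m) x = x := (fixed_iff hx m).2 dvd_rfl
  have hyn : (φ ^ n) y = y := (fixed_iff hy n).2 dvd_rfl
  have hcm : (φ ^ m) c = c := by rw [hc, map_sub, commute_of_fixed hxm, hxm]
  have hcn : (φ ^ n) c = c := by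
    have hc' : c = y - (φ ^ k) y := by rw [hσy]; abel
    rw [hc', map_sub, commute_of_fixed hyn, hyn]
  have hc_int : IsIntegral Fq c := (hx.map (φ ^ k)).sub hx
  have hc_fixed (j : ℕ) : (φ ^ j) c = c := by
    have h1 : (minpoly Fq c).natDegree ∣ 1 := hco ▸ Nat.dvd_gcd
      ((fixed_iff hc_int m).1 hcm) ((fixed_iff hc_int n).1 hcn)
    exact (fixed_iff hc_int j).2 (h1.trans (one_dvd j))
  have hc0 : c = 0 := by
    refine eq_zero_of_nsmul_eq_zero_of_coprime hco ?_ ?_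
    · have := AlgHom.pow_apply_eq_add_nsmul hσx (hc_fixed k) m
      rwa [← pow_mul, (fixed_iff hx _).2 (dvd_mul_left m k), eq_comm, add_eq_left] at this
    · have := AlgHom.pow_apply_eq_add_nsmul hσy (by rw [map_neg, hc_fixed]) n
      rwa [← pow_mul, (fixed_iff hy _).2 (dvd_mul_left n k), eq_comm, add_eq_left, smul_neg,
        neg_eq_zero] at this
  have hmk : m ∣ k := (fixed_iff hx k).1 (by rw [hσx, hc0, add_zero])
  have hnk : n ∣ k := (fixed_iff hy k).1 (by rw [hσy, hc0, neg_zero, add_zero])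
  exact Nat.dvd_antisymm (hco.lcm_eq_mul ▸ natDegree_minpoly_add_dvd_lcm hx hy)
    (hco.mul_dvd_of_dvd_of_dvd hmk hnk)

theorem irreducible_and_coprime_of_mul_dvd_natDegree_minpoly_add {f g : Fq[X]} (hf : f.Monic)
    (hg : g.Monic) {x y : K} (hfx : aeval x f = 0) (hgy : aeval y g = 0)
    (h : f.natDegree * g.natDegree ∣ (minpoly Fq (x + y)).natDegree) :
    Irreducible f ∧ Irreducible g ∧ Nat.Coprime f.natDegree g.natDegree := by
  have hx : IsIntegral Fq x := ⟨f, hf, by rwa [← aeval_def]⟩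
  have hy : IsIntegral Fq y := ⟨g, hg, by rwa [← aeval_def]⟩
  have hxf : minpoly Fq x ∣ f := minpoly.dvd Fq x hfx
  have hyg : minpoly Fq y ∣ g := minpoly.dvd Fq y hgy
  obtain ⟨hm, hn, hco⟩ := Nat.eq_and_eq_and_coprime_of_mul_dvd_lcm
    (minpoly.natDegree_pos hx) (minpoly.natDegree_pos hy)
    (natDegree_le_of_dvd hxf hf.ne_zero) (natDegree_le_of_dvd hyg hg.ne_zero)
    (h.trans (natDegree_minpoly_add_dvd_lcm hx hy))
  rw [eq_of_monic_of_dvd_of_natDegree_le (minpoly.monic hx) hf hxf hm.ge,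
    eq_of_monic_of_dvd_of_natDegree_le (minpoly.monic hy) hg hyg hn.ge]
  exact ⟨minpoly.irreducible hx, minpoly.irreducible hy, hco⟩

end FiniteField

open FiniteField

section CompAdd

variable {F : Type*} [Field F]

theorem aeval_eq_zero_of_mem_acRoots {f : F[X]} {α : AlgebraicClosure F} (h : α ∈ acRoots F f) :
    aeval α f = 0 := by
  rw [acRoots, mem_roots', IsRoot.def, eval_map, ← aeval_def] at h
  exact h.2

theorem card_acRoots (f : F[X]) : Multiset.card (acRoots F f) = f.natDegree :=
  IsAlgClosed.card_roots_eq_natDegree.trans (natDegree_map _)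

theorem exists_mem_acRoots {f : F[X]} (hf : 0 < f.natDegree) : ∃ α, α ∈ acRoots F f :=
  Multiset.card_pos_iff_exists_mem.1 (by rwa [card_acRoots])

theorem compAdd_eq_prod_X_sub_C (f g : F[X]) :
    compAdd F f g =
      (((acRoots F f).bind fun α => (acRoots F g).map (α + ·)).map fun r => X - C r).prod := by
  rw [compAdd, Multiset.map_bind]
  simp only [Multiset.map_map, Function.comp_def]

theorem monic_compAdd (f g : F[X]) : (compAdd F f g).Monic := by
  rw [compAdd_eq_prod_X_sub_C]
  exact monic_multiset_prod_of_monic _ _ fun r _ => monic_X_sub_C r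

theorem natDegree_compAdd (f g : F[X]) :
    (compAdd F f g).natDegree = f.natDegree * g.natDegree := by
  rw [compAdd_eq_prod_X_sub_C, natDegree_multiset_prod_X_sub_C_eq_card, Multiset.card_bind]
  simp [card_acRoots]

theorem isRoot_compAdd {f g : F[X]} {α β : AlgebraicClosure F} (hα : α ∈ acRoots F f)
    (hβ : β ∈ acRoots F g) : (compAdd F f g).IsRoot (α + β) := by
  rw [← mem_roots (monic_compAdd f g).ne_zero, compAdd_eq_prod_X_sub_C,
    roots_multiset_prod_X_sub_C]
  exact Multiset.mem_bind.2 ⟨α, hα, Multiset.mem_map_of_mem _ hβ⟩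

end CompAdd

/-- Brawley–Carlitz: `f ⊕ g` is irreducible over `F_q` iff `f` and `g` are irreducible
and their degrees are coprime.  `F` is the polynomial over `F_q` representing `f ⊕ g`. -/
theorem stmt4 (Fq : Type*) [Field Fq] [Fintype Fq] (f g : Fq[X]) (m n : ℕ)
    (hf : f.Monic) (hg : g.Monic) (hm : f.natDegree = m) (hn : g.natDegree = n)
    (F : Fq[X]) (hF : F.map (algebraMap Fq (AlgebraicClosure Fq)) = compAdd Fq f g) :
    Irreducible F ↔ Irreducible f ∧ Irreducible g ∧ Nat.Coprime m n := by
  subst hm hn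
  have hF_monic : F.Monic := monic_map_iff.1 (hF ▸ monic_compAdd f g)
  have hF_natDegree : F.natDegree = f.natDegree * g.natDegree := by
    rw [← natDegree_map (algebraMap Fq (AlgebraicClosure Fq)), hF, natDegree_compAdd]
  have hF_root {α β} (hα : α ∈ acRoots Fq f) (hβ : β ∈ acRoots Fq g) :
      aeval (α + β) F = 0 := by
    rw [aeval_def, ← eval_map, hF]
    exact isRoot_compAdd hα hβ
  constructor
  · intro hF_irr
    have hmn : 0 < f.natDegree * g.natDegree := hF_natDegree ▸ hF_irr.natDegree_pos
    obtain ⟨α, hα⟩ := exists_mem_acRoots (Nat.pos_of_mul_pos_right hmn)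
    obtain ⟨β, hβ⟩ := exists_mem_acRoots (Nat.pos_of_mul_pos_left hmn)
    refine irreducible_and_coprime_of_mul_dvd_natDegree_minpoly_add hf hg
      (aeval_eq_zero_of_mem_acRoots hα) (aeval_eq_zero_of_mem_acRoots hβ) ?_
    rw [← minpoly.eq_of_irreducible_of_monic hF_irr (hF_root hα hβ) hF_monic, hF_natDegree]
  · rintro ⟨hf_irr, hg_irr, hco⟩
    obtain ⟨α, hα⟩ := exists_mem_acRoots hf_irr.natDegree_pos
    obtain ⟨β, hβ⟩ := exists_mem_acRoots hg_irr.natDegree_pos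
    have hfα := minpoly.eq_of_irreducible_of_monic hf_irr (aeval_eq_zero_of_mem_acRoots hα) hf
    have hgβ := minpoly.eq_of_irreducible_of_monic hg_irr (aeval_eq_zero_of_mem_acRoots hβ) hg
    have hαβ : IsIntegral Fq (α + β) := Algebra.IsIntegral.isIntegral _
    have hdeg := natDegree_minpoly_add_of_coprime (Algebra.IsIntegral.isIntegral α)
      (Algebra.IsIntegral.isIntegral β) (by rwa [← hfα, ← hgβ])
    rw [eq_of_monic_of_dvd_of_natDegree_le (minpoly.monic hαβ) hF_monic
      (minpoly.dvd Fq _ (hF_root hα hβ)) (by rw [hF_natDegree, hdeg, ← hfα, ← hgβ])]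
    exact minpoly.irreducible hαβ
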